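/- arXiv:1601.03934 — 2 statements merged into one kernel-verified Lean document; each statement's English description precedes it below -/
import Mathlib

section
/- For nonnegative integers a, n with a ≤ n-1 and 1 ≤ k ≤ n-1, one has the congruence Σ_{j=1}^{k} (-1)^{j-1} q^{-binom(j,2) - j(k-j)} ([n]_q / [j]_q) qbinom(-1-a, k-j) ≡ qbinom(n-1-a, k) - q^{nk} qbinom(-1-a, k) (mod Φ_n(q)²), as elements of ℤ[q, q^{-1}] (i.e., the difference divided by Φ_n(q)² lies in ℤ[q, q^{-1}] localized appropriately). -/
open Polynomial Finset

/-- The variable `q` as a rational function over `ℚ`. -/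
noncomputable def qv : RatFunc ℚ := RatFunc.X

/-- The q-Pochhammer symbol `(x; t)_k = (1-x)(1-xt)⋯(1-xt^{k-1})`. -/
noncomputable def qPochAt (x t : RatFunc ℚ) (k : ℕ) : RatFunc ℚ :=
  ∏ i ∈ Finset.range k, (1 - x * t ^ i)

/-- The Gaussian binomial coefficient `[α choose k]_t = (t^{α-k+1}; t)_k / (t; t)_k`
with integer upper argument. -/
noncomputable def qbinomAt (t : RatFunc ℚ) (α : ℤ) (k : ℕ) : RatFunc ℚ :=
  (∏ i ∈ Finset.range k, (1 - t ^ (α - k + 1 + i))) /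
    (∏ i ∈ Finset.range k, (1 - t ^ (i + 1)))

/-- The Gaussian binomial coefficient in the variable `q`. -/
noncomputable def qbinom (α : ℤ) (k : ℕ) : RatFunc ℚ := qbinomAt qv α k

/-- The image of an integer polynomial in `RatFunc ℚ`. -/
noncomputable def toF (g : Polynomial ℤ) : RatFunc ℚ :=
  Polynomial.aeval (RatFunc.X : RatFunc ℚ) g

/-- `A ≡ B (mod Φ_n(q)^m)` in the localization of `ℤ[q]` at polynomials coprime
to `Φ_n`: there are `f g : ℤ[q]` with `Φ_n ∤ g` and `(A - B) * g = Φ_n^m * f`. -/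
def modCong (n m : ℕ) (A B : RatFunc ℚ) : Prop :=
  ∃ f g : Polynomial ℤ, ¬ (Polynomial.cyclotomic n ℤ ∣ g) ∧
    (A - B) * toF g = toF ((Polynomial.cyclotomic n ℤ) ^ m * f)

/-- The q-integer `[m]_q = (1-q^m)/(1-q)`. -/
noncomputable def qint (m : ℤ) : RatFunc ℚ := (1 - qv ^ m) / (1 - qv)

/-!
By q-Vandermonde with upper arguments `n` and `c = -1-a`, the right-hand side is
`∑_{j=1}^k q^{(n-j)(k-j)} [n choose j] [c choose k-j]`, and
`[n choose j] = ([n]/[j]) [n-1 choose j-1]` with `[n]/[j] = (1-q^n)/(1-q^j)`.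
So the `j`-th terms on both sides share the factor `1-q^n`, and it suffices that the
remaining factors agree modulo `1-q^n`. There `q^n ≡ 1`, hence `q^{(n-j)(k-j)} ≡ q^{-j(k-j)}`,
and `[n-1 choose j-1] ≡ (-1)^{j-1} q^{-binom(j,2)}` factor by factor, from
`(1-q^{n-t})/(1-q^t) ≡ -q^{-t}`. Since `k < n`, every denominator `1-q^t` that occurs is
nonzero at a primitive `n`-th root of unity `ζ`, so the congruences hold in the ring of
rational functions regular at `ζ`, where `Φ_n ∣ 1-q^n` makes them congruences modulo `Φ_n^2`.
-/

lemma toF_injective : Function.Injective toF := by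
  have key (g : ℤ[X]) :
      toF g = algebraMap ℚ[X] (RatFunc ℚ) (g.map (Int.castRingHom ℚ)) := by
    rw [toF, ← RatFunc.algebraMap_X, aeval_algebraMap_apply, ← aeval_map_algebraMap ℚ,
      aeval_X_left_apply]
    rfl
  intro a b h
  rw [key, key] at h
  exact map_injective _ (RingHom.injective_int _) (RatFunc.algebraMap_injective ℚ h)

lemma toF_ne_zero {g : ℤ[X]} (hg : g ≠ 0) : toF g ≠ 0 := fun h =>
  hg (toF_injective (by rw [h, toF, map_zero]))

lemma qv_ne_zero : qv ≠ 0 := RatFunc.X_ne_zero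

lemma one_sub_qv_pow_eq_toF (m : ℕ) : 1 - qv ^ m = toF (1 - X ^ m) := by
  simp [toF, qv]

lemma one_sub_qv_pow_ne_zero {m : ℕ} (hm : m ≠ 0) : 1 - qv ^ m ≠ 0 := by
  rw [one_sub_qv_pow_eq_toF, ← neg_sub, ← C_1, toF, map_neg, neg_ne_zero]
  exact toF_ne_zero (X_pow_sub_C_ne_zero (Nat.pos_of_ne_zero hm) 1)

lemma one_sub_qv_ne_zero : 1 - qv ≠ 0 := by
  simpa using one_sub_qv_pow_ne_zero one_ne_zero

lemma prod_one_sub_qv_pow_ne_zero (k : ℕ) : ∏ t ∈ range k, (1 - qv ^ (t + 1)) ≠ 0 :=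
  prod_ne_zero_iff.2 fun t _ => one_sub_qv_pow_ne_zero t.succ_ne_zero

lemma qbinom_eq_prod_div (α : ℤ) (k : ℕ) :
    qbinom α k =
      (∏ t ∈ range k, (1 - qv ^ (α - t))) / ∏ t ∈ range k, (1 - qv ^ (t + 1)) := by
  rw [qbinom, qbinomAt, ← prod_range_reflect (fun t : ℕ => 1 - qv ^ (α - t))]
  congr 1
  refine prod_congr rfl fun t ht => ?_
  rw [mem_range] at ht
  congr 2
  omega

lemma qbinom_zero_right (α : ℤ) : qbinom α 0 = 1 := by
  simp [qbinom, qbinomAt]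

lemma qbinom_zero_succ (k : ℕ) : qbinom 0 (k + 1) = 0 := by
  simp [qbinom_eq_prod_div, prod_range_succ']

lemma prod_range_succ_one_sub_qv_zpow (α : ℤ) (k : ℕ) :
    ∏ t ∈ range (k + 1), (1 - qv ^ (α + 1 - t)) =
      (∏ t ∈ range k, (1 - qv ^ (α - t))) * (1 - qv ^ (α + 1)) := by
  rw [prod_range_succ']
  push_cast
  simp_rw [add_sub_add_right_eq_sub]
  simp

lemma qbinom_succ_succ (α : ℤ) (k : ℕ) :
    qbinom (α + 1) (k + 1) = qv ^ (k + 1) * qbinom α (k + 1) + qbinom α k := by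
  rw [qbinom_eq_prod_div, qbinom_eq_prod_div, qbinom_eq_prod_div,
    prod_range_succ_one_sub_qv_zpow, prod_range_succ (fun t : ℕ => 1 - qv ^ (α - t)),
    prod_range_succ _ k]
  have hD := prod_one_sub_qv_pow_ne_zero k
  have hk := one_sub_qv_pow_ne_zero k.succ_ne_zero
  have hpow : qv ^ (k + 1) * qv ^ (α - k) = qv ^ (α + 1) := by
    rw [← zpow_natCast, ← zpow_add₀ qv_ne_zero]
    congr 1
    push_cast
    ring
  field_simp
  linear_combination (∏ t ∈ range k, (1 - qv ^ (α - t))) * hpow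

lemma qbinom_succ_succ_eq_qint_div_mul (α : ℤ) (k : ℕ) :
    qbinom (α + 1) (k + 1) = qint (α + 1) / qint (k + 1) * qbinom α k := by
  rw [qbinom_eq_prod_div, qbinom_eq_prod_div, prod_range_succ_one_sub_qv_zpow,
    prod_range_succ _ k, qint, qint, ← Nat.cast_succ, zpow_natCast]
  have hD := prod_one_sub_qv_pow_ne_zero k
  have hk := one_sub_qv_pow_ne_zero k.succ_ne_zero
  have h1 := one_sub_qv_ne_zero
  field_simp

lemma qint_div_qint (n j : ℕ) : qint n / qint j = (1 - qv ^ (n : ℤ)) * (1 - qv ^ j)⁻¹ := by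
  rw [qint, qint, zpow_natCast qv j, div_div_div_cancel_right₀ one_sub_qv_ne_zero, div_eq_mul_inv]

lemma qv_zpow_mul_qbinom_succ_succ (m k j : ℕ) :
    qv ^ (((m : ℤ) + 1 - (j + 1)) * ((k : ℤ) + 1 - (j + 1))) * qbinom ((m : ℤ) + 1) (j + 1) =
      qv ^ (k + 1) * (qv ^ (((m : ℤ) - (j + 1)) * ((k : ℤ) + 1 - (j + 1))) * qbinom m (j + 1)) +
        qv ^ (((m : ℤ) - j) * ((k : ℤ) - j)) * qbinom m j := by
  have hpow : qv ^ (((m : ℤ) - j) * ((k : ℤ) - j)) * qv ^ (j + 1) =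
      qv ^ (k + 1) * qv ^ (((m : ℤ) - (j + 1)) * ((k : ℤ) + 1 - (j + 1))) := by
    simp only [← zpow_natCast, ← zpow_add₀ qv_ne_zero]
    push_cast
    ring_nf
  rw [qbinom_succ_succ, show ((m : ℤ) + 1 - (j + 1)) * ((k : ℤ) + 1 - (j + 1)) =
    ((m : ℤ) - j) * ((k : ℤ) - j) by ring]
  linear_combination qbinom m (j + 1) * hpow

theorem qbinom_vandermonde (c : ℤ) (m k : ℕ) :
    qbinom (m + c) k = ∑ j ∈ range (k + 1),
      qv ^ (((m : ℤ) - j) * ((k : ℤ) - j)) * qbinom m j * qbinom c (k - j) := by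
  induction m generalizing k with
  | zero => simp [sum_range_succ', qbinom_zero_succ, qbinom_zero_right]
  | succ m ih =>
    cases k with
    | zero => simp [qbinom_zero_right]
    | succ k =>
      have hpow : qv ^ (k + 1) * qv ^ ((m : ℤ) * ((k : ℤ) + 1)) =
          qv ^ (((m : ℤ) + 1) * ((k : ℤ) + 1)) := by
        rw [← zpow_natCast, ← zpow_add₀ qv_ne_zero]
        push_cast
        ring_nf
      have ihk := ih k
      have ihk1 := ih (k + 1)
      rw [sum_range_succ'] at ihk1 ⊢
      push_cast at ihk1 ⊢
      simp only [qv_zpow_mul_qbinom_succ_succ, add_mul, sum_add_distrib]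
      rw [add_right_comm, qbinom_succ_succ]
      simp only [sub_zero, qbinom_zero_right, mul_one] at ihk1 ⊢
      simp only [mul_assoc, ← mul_sum] at ihk ihk1 ⊢
      linear_combination qv ^ (k + 1) * ihk1 + ihk + qbinom c (k + 1) * hpow

namespace Subring

variable {K : Type*} [CommRing K]

def ModEq (S : Subring K) (x a b : K) : Prop := ∃ z ∈ S, a - b = x * z

variable {S : Subring K} {x y a b c d : K}

namespace ModEq

lemma symm (h : S.ModEq x a b) : S.ModEq x b a := by
  obtain ⟨z, hz, h⟩ := h
  exact ⟨-z, neg_mem hz, by linear_combination -h⟩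

lemma add (h₁ : S.ModEq x a b) (h₂ : S.ModEq x c d) : S.ModEq x (a + c) (b + d) := by
  obtain ⟨z₁, hz₁, h₁⟩ := h₁
  obtain ⟨z₂, hz₂, h₂⟩ := h₂
  exact ⟨z₁ + z₂, add_mem hz₁ hz₂, by linear_combination h₁ + h₂⟩

lemma mul (h₁ : S.ModEq x a b) (h₂ : S.ModEq x c d) (hb : b ∈ S) (hc : c ∈ S) :
    S.ModEq x (a * c) (b * d) := by
  obtain ⟨z₁, hz₁, h₁⟩ := h₁
  obtain ⟨z₂, hz₂, h₂⟩ := h₂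
  exact ⟨z₁ * c + b * z₂, add_mem (mul_mem hz₁ hc) (mul_mem hb hz₂),
    by linear_combination c * h₁ + b * h₂⟩

lemma mul_left (hc : c ∈ S) (h : S.ModEq x a b) : S.ModEq x (c * a) (c * b) := by
  obtain ⟨z, hz, h⟩ := h
  exact ⟨c * z, mul_mem hc hz, by linear_combination c * h⟩

lemma mul_right (hc : c ∈ S) (h : S.ModEq x a b) : S.ModEq x (a * c) (b * c) := by
  simpa only [mul_comm _ c] using h.mul_left hc

lemma mul_left' (h : S.ModEq x a b) : S.ModEq (c * x) (c * a) (c * b) := by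
  obtain ⟨z, hz, h⟩ := h
  exact ⟨z, hz, by linear_combination c * h⟩

lemma of_mul_right (hy : y ∈ S) (h : S.ModEq (x * y) a b) : S.ModEq x a b := by
  obtain ⟨z, hz, h⟩ := h
  exact ⟨y * z, mul_mem hy hz, by linear_combination h⟩

lemma sum {ι : Type*} {s : Finset ι} {f g : ι → K} (h : ∀ i ∈ s, S.ModEq x (f i) (g i)) :
    S.ModEq x (∑ i ∈ s, f i) (∑ i ∈ s, g i) := by
  induction s using Finset.cons_induction with
  | empty => exact ⟨0, zero_mem S, by simp⟩
  | cons i s hi ih =>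
    rw [sum_cons, sum_cons]
    exact (h i (mem_cons_self i s)).add (ih fun j hj => h j (mem_cons_of_mem hj))

lemma prod {ι : Type*} {s : Finset ι} {f g : ι → K} (h : ∀ i ∈ s, S.ModEq x (f i) (g i))
    (hf : ∀ i ∈ s, f i ∈ S) (hg : ∀ i ∈ s, g i ∈ S) :
    S.ModEq x (∏ i ∈ s, f i) (∏ i ∈ s, g i) := by
  induction s using Finset.cons_induction with
  | empty => exact ⟨0, zero_mem S, by simp⟩
  | cons i s hi ih =>
    rw [prod_cons, prod_cons]
    exact (h i (mem_cons_self i s)).mul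
      (ih (fun j hj => h j (mem_cons_of_mem hj)) (fun j hj => hf j (mem_cons_of_mem hj))
        (fun j hj => hg j (mem_cons_of_mem hj)))
      (hg i (mem_cons_self i s)) (prod_mem fun j hj => hf j (mem_cons_of_mem hj))

end ModEq

lemma pow_modEq_one (hy : y ∈ S) (d : ℕ) : S.ModEq (1 - y) (y ^ d) 1 :=
  ⟨-∑ t ∈ range d, y ^ t, neg_mem (sum_mem fun t _ => pow_mem hy t),
    by linear_combination -(geom_sum_mul y d)⟩

end Subring

open Subring

section RegularAt

variable {L : Type*} [CommRing L] [IsDomain L] {z : L}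

/-- Denominators are tested by evaluation at `z` rather than by divisibility by `Φ_n`, so that
closure under products only needs `L` to be a domain. -/
def regularAt (z : L) : Subring (RatFunc ℚ) where
  carrier := {A | ∃ f g : ℤ[X], aeval z g ≠ 0 ∧ A * toF g = toF f}
  mul_mem' := by
    rintro A B ⟨f₁, g₁, hg₁, h₁⟩ ⟨f₂, g₂, hg₂, h₂⟩
    refine ⟨f₁ * f₂, g₁ * g₂, by simp [hg₁, hg₂], ?_⟩
    simp only [toF, map_mul] at h₁ h₂ ⊢
    linear_combination B * aeval RatFunc.X g₂ * h₁ + aeval RatFunc.X f₁ * h₂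
  one_mem' := ⟨1, 1, by simp, by simp [toF]⟩
  add_mem' := by
    rintro A B ⟨f₁, g₁, hg₁, h₁⟩ ⟨f₂, g₂, hg₂, h₂⟩
    refine ⟨f₁ * g₂ + f₂ * g₁, g₁ * g₂, by simp [hg₁, hg₂], ?_⟩
    simp only [toF, map_mul, map_add] at h₁ h₂ ⊢
    linear_combination aeval RatFunc.X g₂ * h₁ + aeval RatFunc.X g₁ * h₂
  zero_mem' := ⟨0, 1, by simp, by simp [toF]⟩
  neg_mem' := by
    rintro A ⟨f, g, hg, h⟩
    refine ⟨-f, g, hg, ?_⟩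
    simp only [toF, map_neg] at h ⊢
    linear_combination -h

lemma toF_mem_regularAt (p : ℤ[X]) : toF p ∈ regularAt z :=
  ⟨p, 1, by simp, by simp [toF]⟩

lemma inv_toF_mem_regularAt {g : ℤ[X]} (hg : aeval z g ≠ 0) : (toF g)⁻¹ ∈ regularAt z := by
  have hg₀ : g ≠ 0 := by
    rintro rfl
    simp at hg
  exact ⟨1, g, hg, by rw [inv_mul_cancel₀ (toF_ne_zero hg₀), toF, map_one]⟩

lemma qv_zpow_mem_regularAt (hz : z ≠ 0) (e : ℤ) : qv ^ e ∈ regularAt z := by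
  have hX : qv = toF X := by simp [toF, qv]
  obtain ⟨d, rfl | rfl⟩ := Int.eq_nat_or_neg e
  · rw [zpow_natCast, hX]
    exact pow_mem (toF_mem_regularAt X) d
  · rw [zpow_neg, zpow_natCast, ← inv_pow, hX]
    exact pow_mem (inv_toF_mem_regularAt (by simpa using hz)) d

lemma inv_one_sub_qv_pow_mem_regularAt {m : ℕ} (hm : z ^ m ≠ 1) :
    (1 - qv ^ m)⁻¹ ∈ regularAt z := by
  rw [one_sub_qv_pow_eq_toF]
  exact inv_toF_mem_regularAt (by simpa [sub_eq_zero] using hm.symm)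

lemma qbinom_mem_regularAt {n m : ℕ} (hz : IsPrimitiveRoot z n) (c : ℤ) (hm : m < n) :
    qbinom c m ∈ regularAt z := by
  rw [qbinom_eq_prod_div, div_eq_mul_inv, ← prod_inv_distrib]
  refine mul_mem (prod_mem fun t _ => sub_mem (one_mem _) ?_) (prod_mem fun t ht => ?_)
  · exact qv_zpow_mem_regularAt (hz.ne_zero (by omega)) _
  · exact inv_one_sub_qv_pow_mem_regularAt
      (hz.pow_ne_one_of_pos_of_lt t.succ_ne_zero (by rw [mem_range] at ht; omega))

end RegularAt

lemma prod_range_neg_qv_zpow (i : ℕ) :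
    ∏ t ∈ range i, -qv ^ (-((t : ℤ) + 1)) = (-1) ^ i * qv ^ (-(((i : ℤ) + 1) * i / 2)) := by
  induction i with
  | zero => simp
  | succ i ih =>
    have hexp : -(((i : ℤ) + 1) * i / 2) + -((i : ℤ) + 1) =
        -(((i + 1 : ℕ) + 1) * (i + 1 : ℕ) / 2) := by
      have : (((i + 1 : ℕ) : ℤ) + 1) * (i + 1 : ℕ) =
          ((i : ℤ) + 1) * i + ((i : ℤ) + 1) * 2 := by
        push_cast
        ring
      rw [this, Int.add_mul_ediv_right _ _ two_ne_zero]
      ring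
    rw [prod_range_succ, ih, ← hexp, zpow_add₀ qv_ne_zero]
    ring

section Congruences

variable {L : Type*} [CommRing L] [IsDomain L] {z : L} {n : ℕ}

lemma qbinom_sub_one_modEq (hz : IsPrimitiveRoot z n) {i : ℕ} (hi : i < n) :
    (regularAt z).ModEq (1 - qv ^ (n : ℤ)) (qbinom ((n : ℤ) - 1) i)
      ((-1) ^ i * qv ^ (-(((i : ℤ) + 1) * i / 2))) := by
  have hz₀ : z ≠ 0 := hz.ne_zero (by omega)
  have hinv (t : ℕ) (ht : t ∈ range i) : (1 - qv ^ (t + 1))⁻¹ ∈ regularAt z :=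
    inv_one_sub_qv_pow_mem_regularAt
      (hz.pow_ne_one_of_pos_of_lt t.succ_ne_zero (by rw [mem_range] at ht; omega))
  have hfactor (t : ℕ) :
      -qv ^ (-((t : ℤ) + 1)) = (1 - qv ^ (-((t : ℤ) + 1))) * (1 - qv ^ (t + 1))⁻¹ := by
    have ht := one_sub_qv_pow_ne_zero t.succ_ne_zero
    have hpow : qv ^ (-((t : ℤ) + 1)) * qv ^ (t + 1) = 1 := by
      rw [← zpow_natCast, ← zpow_add₀ qv_ne_zero]
      push_cast
      simp
    field_simp
    linear_combination hpow
  rw [qbinom_eq_prod_div, div_eq_mul_inv, ← prod_inv_distrib, ← prod_mul_distrib,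
    ← prod_range_neg_qv_zpow]
  refine ModEq.prod (fun t ht => ?_) (fun t ht => mul_mem ?_ (hinv t ht)) (fun t _ => ?_)
  · rw [hfactor]
    refine ModEq.mul_right (hinv t ht)
      ⟨qv ^ (-((t : ℤ) + 1)), qv_zpow_mem_regularAt hz₀ _, ?_⟩
    rw [show (n : ℤ) - 1 - t = n + -((t : ℤ) + 1) by ring, zpow_add₀ qv_ne_zero]
    ring
  · exact sub_mem (one_mem _) (qv_zpow_mem_regularAt hz₀ _)
  · exact neg_mem (qv_zpow_mem_regularAt hz₀ _)

lemma qv_zpow_mul_qbinom_sub_one_modEq (hz : IsPrimitiveRoot z n) {j k : ℕ} (hj : 1 ≤ j)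
    (hjn : j ≤ n) (hjk : j ≤ k) :
    (regularAt z).ModEq (1 - qv ^ (n : ℤ))
      (qv ^ (((n : ℤ) - j) * ((k : ℤ) - j)) * qbinom ((n : ℤ) - 1) (j - 1))
      ((-1) ^ (j - 1) *
        qv ^ (-((j : ℤ) * ((j : ℤ) - 1) / 2) - (j : ℤ) * ((k : ℤ) - j))) := by
  obtain ⟨i, rfl⟩ : ∃ i, j = i + 1 := ⟨j - 1, by omega⟩
  obtain ⟨d, rfl⟩ : ∃ d, k = i + 1 + d := ⟨k - (i + 1), by omega⟩
  have hz₀ : z ≠ 0 := hz.ne_zero (by omega)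
  have hpow : qv ^ (((n : ℤ) - (i + 1 : ℕ)) * ((i + 1 + d : ℕ) - (i + 1 : ℕ))) =
      (qv ^ (n : ℤ)) ^ d * qv ^ (-(((i : ℤ) + 1) * d)) := by
    rw [← zpow_natCast (qv ^ (n : ℤ)) d, ← zpow_mul, ← zpow_add₀ qv_ne_zero]
    push_cast
    ring_nf
  have hexp : -(((i + 1 : ℕ) : ℤ) * (((i + 1 : ℕ) : ℤ) - 1) / 2) -
      ((i + 1 : ℕ) : ℤ) * ((i + 1 + d : ℕ) - (i + 1 : ℕ)) =
      -(((i : ℤ) + 1) * i / 2) + -(((i : ℤ) + 1) * d) := by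
    push_cast
    simp only [add_sub_cancel_right, add_sub_cancel_left]
    ring
  have h := ((pow_modEq_one (qv_zpow_mem_regularAt hz₀ n) d).mul
    (qbinom_sub_one_modEq hz (i := i) (by omega)) (one_mem _)
    (qbinom_mem_regularAt hz _ (by omega))).mul_right
      (qv_zpow_mem_regularAt hz₀ (-(((i : ℤ) + 1) * d)))
  convert h using 1
  · rw [hpow, Nat.add_sub_cancel]
    ring
  · rw [hexp, zpow_add₀ qv_ne_zero, Nat.add_sub_cancel]
    ring

lemma qbinom_term_modEq (hz : IsPrimitiveRoot z n) (c : ℤ) {j k : ℕ} (hj : 1 ≤ j)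
    (hjk : j ≤ k) (hkn : k < n) :
    (regularAt z).ModEq ((1 - qv ^ (n : ℤ)) * (1 - qv ^ (n : ℤ)))
      ((-1) ^ (j - 1) * qv ^ (-((j : ℤ) * ((j : ℤ) - 1) / 2) - (j : ℤ) * ((k : ℤ) - j)) *
        (qint n / qint j) * qbinom c (k - j))
      (qv ^ (((n : ℤ) - j) * ((k : ℤ) - j)) * qbinom n j * qbinom c (k - j)) := by
  have hbinom : qbinom n j = qint n / qint j * qbinom ((n : ℤ) - 1) (j - 1) := by
    obtain ⟨i, rfl⟩ : ∃ i, j = i + 1 := ⟨j - 1, by omega⟩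
    simpa using qbinom_succ_succ_eq_qint_div_mul ((n : ℤ) - 1) i
  have hw : (1 - qv ^ j)⁻¹ * qbinom c (k - j) ∈ regularAt z :=
    mul_mem (inv_one_sub_qv_pow_mem_regularAt
      (hz.pow_ne_one_of_pos_of_lt (by omega) (by omega))) (qbinom_mem_regularAt hz c (by omega))
  convert ((qv_zpow_mul_qbinom_sub_one_modEq hz hj (by omega) hjk).symm.mul_left hw).mul_left'
    (c := 1 - qv ^ (n : ℤ)) using 1
  · rw [qint_div_qint]
    ring
  · rw [hbinom, qint_div_qint]
    ring

end Congruences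

lemma modCong_of_modEq {L : Type*} [CommRing L] [IsDomain L] {z : L} {n m : ℕ}
    {A B : RatFunc ℚ} (hz : IsPrimitiveRoot z n) (hn : 0 < n)
    (h : (regularAt z).ModEq (toF (cyclotomic n ℤ ^ m)) A B) : modCong n m A B := by
  obtain ⟨Z, ⟨f, g, hg, hZ⟩, hAB⟩ := h
  refine ⟨f, g, fun ⟨u, hu⟩ => hg ?_, ?_⟩
  · have hroot : aeval z (cyclotomic n ℤ) = 0 := by
      simpa [aeval_def, eval₂_eq_eval_map] using hz.isRoot_cyclotomic hn
    rw [hu, map_mul, hroot, zero_mul]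
  · rw [hAB, mul_assoc, hZ, toF, toF, toF, map_mul]

lemma qbinom_add_sub_eq_sum_Icc (c : ℤ) (m k : ℕ) :
    qbinom (m + c) k - qv ^ (m * k) * qbinom c k = ∑ j ∈ Icc 1 k,
      qv ^ (((m : ℤ) - j) * ((k : ℤ) - j)) * qbinom m j * qbinom c (k - j) := by
  have hIcc : (range (k + 1)).erase 0 = Icc 1 k := by
    ext j
    simp only [mem_erase, mem_range, mem_Icc]
    omega
  rw [qbinom_vandermonde, ← add_sum_erase _ _ (mem_range.2 k.succ_pos), hIcc]
  simp [qbinom_zero_right, ← zpow_natCast]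

theorem stmt9_general (n a k : ℕ) (hk1 : 1 ≤ k) (hk2 : k ≤ n - 1) :
    modCong n 2
      (∑ j ∈ Finset.Icc 1 k,
        (-1 : RatFunc ℚ) ^ (j - 1) *
          qv ^ (-((j : ℤ) * ((j : ℤ) - 1) / 2) - (j : ℤ) * ((k : ℤ) - j)) *
          (qint n / qint j) * qbinom (-1 - (a : ℤ)) (k - j))
      (qbinom ((n : ℤ) - 1 - a) k - qv ^ (n * k) * qbinom (-1 - (a : ℤ)) k) := by
  have hn : 0 < n := by omega
  have hz := Complex.isPrimitiveRoot_exp n hn.ne'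
  obtain ⟨u, hu⟩ := cyclotomic.dvd_X_pow_sub_one n ℤ
  have hmod :
      (1 - qv ^ (n : ℤ)) * (1 - qv ^ (n : ℤ)) = toF (cyclotomic n ℤ ^ 2) * toF (u ^ 2) := by
    rw [zpow_natCast, one_sub_qv_pow_eq_toF, toF, toF, toF, ← map_mul, ← map_mul,
      ← neg_sub, hu]
    ring_nf
  refine modCong_of_modEq hz hn (ModEq.of_mul_right (toF_mem_regularAt (u ^ 2)) ?_)
  rw [← hmod, show (n : ℤ) - 1 - a = n + (-1 - a) by ring, qbinom_add_sub_eq_sum_Icc]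
  refine ModEq.sum fun j hj => ?_
  rw [mem_Icc] at hj
  exact qbinom_term_modEq hz _ hj.1 hj.2 (by omega)

/-- For `a ≤ n-1` and `1 ≤ k ≤ n-1`:
`Σ_{j=1}^k (-1)^{j-1} q^{-binom(j,2)-j(k-j)} ([n]_q/[j]_q) [-1-a choose k-j]
  ≡ [n-1-a choose k] - q^{nk} [-1-a choose k] (mod Φ_n(q)²)`. -/
theorem stmt9 (n a k : ℕ) (ha : a ≤ n - 1) (hk1 : 1 ≤ k) (hk2 : k ≤ n - 1) :
    modCong n 2
      (∑ j ∈ Finset.Icc 1 k,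
        (-1 : RatFunc ℚ) ^ (j - 1) *
          qv ^ (-((j : ℤ) * ((j : ℤ) - 1) / 2) - (j : ℤ) * ((k : ℤ) - j)) *
          (qint n / qint j) * qbinom (-1 - (a : ℤ)) (k - j))
      (qbinom ((n : ℤ) - 1 - a) k - qv ^ (n * k) * qbinom (-1 - (a : ℤ)) k) :=
  stmt9_general n a k hk1 hk2
end

section
/- For a nonnegative integer k, Σ_{j=0}^{k} (-1)^j q^{binom(j,2) - kj} qbinom(k, j) · q^j (x;q)_j / (q;q)_j = (x q^{-1}; q^{-1})_k / (q^{-1}; q^{-1})_k, as an identity of rational functions in q and x. -/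
open Polynomial Finset

/-!
Since `(-1)^j q^{binom(j,2)-kj} [k choose j]_q = (q^{-k};q)_j/(q;q)_j`, the left-hand side is the
terminating series `₂φ₁(q^{-k}, x; q; q, q)`, and the right-hand side is
`∏_{i=1}^k (x - q^i) / (q;q)_k`; this is a case of the q-Chu–Vandermonde sum.
It is proved by induction on `k`: multiplying by `x - q^{k+1}` and using
`x (x;q)_j = q^{-j} ((x;q)_j - (x;q)_{j+1})` re-expands the product in the basis `(x;q)_j`,
and the coefficients of the series satisfy the resulting three-term recurrence.
-/

lemma not_isOfFinOrder_qv : ¬IsOfFinOrder qv := by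
  refine not_isOfFinOrder_of_injective_pow fun m n h => ?_
  have h' : (X : ℚ[X]) ^ m = X ^ n :=
    RatFunc.algebraMap_injective ℚ (by rw [map_pow, map_pow, RatFunc.algebraMap_X]; exact h)
  simpa using congrArg natDegree h'

section

variable {t : RatFunc ℚ}

@[simp]
lemma qPochAt_zero (x t : RatFunc ℚ) : qPochAt x t 0 = 1 :=
  prod_range_zero _

lemma qPochAt_succ (x t : RatFunc ℚ) (j : ℕ) :
    qPochAt x t (j + 1) = qPochAt x t j * (1 - x * t ^ j) :=
  prod_range_succ _ _

lemma qPochAt_succ' (x t : RatFunc ℚ) (j : ℕ) :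
    qPochAt x t (j + 1) = (1 - x) * qPochAt (x * t) t j := by
  simp only [qPochAt, prod_range_succ', pow_zero, mul_one, pow_succ', mul_assoc]
  rw [mul_comm]

lemma qPochAt_self (t : RatFunc ℚ) (j : ℕ) :
    qPochAt t t j = ∏ i ∈ range j, (1 - t ^ (i + 1)) := by
  simp only [qPochAt, pow_succ']

lemma one_sub_pow_succ_ne_zero (hfin : ¬IsOfFinOrder t) (n : ℕ) : 1 - t ^ (n + 1) ≠ 0 :=
  fun h => hfin (isOfFinOrder_iff_pow_eq_one.2 ⟨n + 1, n.succ_pos, (sub_eq_zero.1 h).symm⟩)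

lemma qPochAt_self_ne_zero (hfin : ¬IsOfFinOrder t) (j : ℕ) : qPochAt t t j ≠ 0 := by
  rw [qPochAt_self, prod_ne_zero_iff]
  exact fun i _ => one_sub_pow_succ_ne_zero hfin i

lemma mul_qPochAt (ht : t ≠ 0) (x : RatFunc ℚ) (j : ℕ) :
    x * qPochAt x t j = (t ^ j)⁻¹ * (qPochAt x t j - qPochAt x t (j + 1)) := by
  rw [qPochAt_succ]
  field_simp
  ring

lemma qPochAt_zpow_neg (ht : t ≠ 0) (α : ℤ) (j : ℕ) :
    qPochAt (t ^ (-α)) t j = (-1) ^ j * t ^ ((j : ℤ) * ((j : ℤ) - 1) / 2 - α * j) *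
      ∏ i ∈ range j, (1 - t ^ (α - j + 1 + i)) := by
  induction j with
  | zero => simp [qPochAt]
  | succ j ih =>
    have hexp : ((j + 1 : ℕ) : ℤ) * (((j + 1 : ℕ) : ℤ) - 1) / 2 - α * (j + 1 : ℕ)
        = ((j : ℤ) * ((j : ℤ) - 1) / 2 - α * j) + (j - α) := by
      have h : ((j : ℤ) + 1) * ((j : ℤ) + 1 - 1) = (j : ℤ) * ((j : ℤ) - 1) + j * 2 := by ring
      push_cast
      rw [h, Int.add_mul_ediv_right _ _ two_ne_zero]
      ring
    have hfactor : 1 - t ^ (-α) * t ^ j = -t ^ ((j : ℤ) - α) * (1 - t ^ (α - j)) := by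
      rw [← zpow_natCast t j, ← zpow_add₀ ht, mul_sub, mul_one, neg_mul, ← zpow_add₀ ht,
        sub_add_sub_cancel', sub_self, zpow_zero, neg_add_eq_sub]
      ring
    rw [qPochAt_succ, ih, hfactor, prod_range_succ', hexp, zpow_add₀ ht]
    have hshift (i : ℤ) : α - (j + 1) + 1 + (i + 1) = α - j + 1 + i := by ring
    have hlast : α - (j + 1) + 1 + 0 = α - j := by ring
    push_cast
    simp only [hshift, hlast]
    ring

lemma neg_one_pow_mul_zpow_mul_qbinomAt (ht : t ≠ 0) (α : ℤ) (j : ℕ) :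
    (-1) ^ j * t ^ ((j : ℤ) * ((j : ℤ) - 1) / 2 - α * j) * qbinomAt t α j =
      qPochAt (t ^ (-α)) t j / qPochAt t t j := by
  rw [qbinomAt, ← qPochAt_self, qPochAt_zpow_neg ht, mul_div_assoc]

lemma qPochAt_inv_div (ht : t ≠ 0) (x : RatFunc ℚ) (k : ℕ) :
    qPochAt (x * t⁻¹) t⁻¹ k / qPochAt t⁻¹ t⁻¹ k =
      (∏ i ∈ range k, (x - t ^ (i + 1))) / qPochAt t t k := by
  rw [qPochAt_self, qPochAt, qPochAt, ← prod_div_distrib, ← prod_div_distrib]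
  refine prod_congr rfl fun i _ => ?_
  have hs : t ^ (i + 1) ≠ 0 := pow_ne_zero _ ht
  rw [mul_assoc, ← pow_succ', inv_pow, ← mul_div_mul_left _ _ (neg_ne_zero.2 hs)]
  congr 1 <;> field_simp <;> ring

-- The coefficient of `(x;t)_j` in `₂φ₁(t^{-k}, x; t; t, t)`.
noncomputable def chuCoeff (t : RatFunc ℚ) (k j : ℕ) : RatFunc ℚ :=
  t ^ j * qPochAt (t ^ (-(k : ℤ))) t j / qPochAt t t j ^ 2

lemma chuCoeff_zero_right (t : RatFunc ℚ) (k : ℕ) : chuCoeff t k 0 = 1 := by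
  simp [chuCoeff]

lemma chuCoeff_succ_self (ht : t ≠ 0) (k : ℕ) : chuCoeff t k (k + 1) = 0 := by
  rw [chuCoeff, qPochAt_succ, zpow_neg, zpow_natCast, inv_mul_cancel₀ (pow_ne_zero k ht)]
  simp

lemma chuCoeff_succ_succ (ht : t ≠ 0) (hfin : ¬IsOfFinOrder t) (k j : ℕ) :
    (1 - t ^ (k + 1)) * chuCoeff t (k + 1) (j + 1) =
      ((t ^ (j + 1))⁻¹ - t ^ (k + 1)) * chuCoeff t k (j + 1) - (t ^ j)⁻¹ * chuCoeff t k j := by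
  have hshift : t ^ (-((k + 1 : ℕ) : ℤ)) * t = t ^ (-(k : ℤ)) := by
    rw [← zpow_add_one₀ ht]
    congr 1
    push_cast
    ring
  have hQ := qPochAt_self_ne_zero hfin j
  have hu : 1 - t * t ^ j ≠ 0 := pow_succ' t j ▸ one_sub_pow_succ_ne_zero hfin j
  simp only [chuCoeff]
  rw [qPochAt_succ', hshift, qPochAt_succ (t ^ (-(k : ℤ))), qPochAt_succ t]
  simp only [zpow_neg, zpow_natCast]
  field_simp
  ring

lemma sum_chuCoeff_mul_qPochAt (ht : t ≠ 0) (hfin : ¬IsOfFinOrder t) (k : ℕ) (x : RatFunc ℚ) :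
    ∑ j ∈ range (k + 1), chuCoeff t k j * qPochAt x t j =
      (∏ i ∈ range k, (x - t ^ (i + 1))) / qPochAt t t k := by
  induction k with
  | zero => simp [chuCoeff_zero_right]
  | succ k ih =>
    set g : ℕ → RatFunc ℚ := fun j => ((t ^ j)⁻¹ - t ^ (k + 1)) * chuCoeff t k j * qPochAt x t j
    have hg : ∑ j ∈ range (k + 1), g (j + 1) + (1 - t ^ (k + 1)) = ∑ j ∈ range (k + 1), g j := by
      have h := sum_range_succ' g (k + 1)
      rw [sum_range_succ] at h
      simpa [g, chuCoeff_succ_self ht, chuCoeff_zero_right] using h.symm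
    have hrec : (1 - t ^ (k + 1)) * ∑ j ∈ range (k + 2), chuCoeff t (k + 1) j * qPochAt x t j =
        (x - t ^ (k + 1)) * ∑ j ∈ range (k + 1), chuCoeff t k j * qPochAt x t j :=
      calc (1 - t ^ (k + 1)) * ∑ j ∈ range (k + 2), chuCoeff t (k + 1) j * qPochAt x t j
          = ∑ j ∈ range (k + 1), (g (j + 1) - (t ^ j)⁻¹ * chuCoeff t k j * qPochAt x t (j + 1))
              + (1 - t ^ (k + 1)) := by
            rw [sum_range_succ', mul_add, mul_sum, chuCoeff_zero_right, qPochAt_zero, mul_one, mul_one]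
            refine congrArg (· + _) (sum_congr rfl fun j _ => ?_)
            rw [← mul_assoc, chuCoeff_succ_succ ht hfin]
            ring
        _ = ∑ j ∈ range (k + 1), (g j - (t ^ j)⁻¹ * chuCoeff t k j * qPochAt x t (j + 1)) := by
            rw [sum_sub_distrib, sum_sub_distrib, ← hg]
            ring
        _ = (x - t ^ (k + 1)) * ∑ j ∈ range (k + 1), chuCoeff t k j * qPochAt x t j := by
            rw [mul_sum]
            refine sum_congr rfl fun j _ => ?_
            linear_combination -chuCoeff t k j * mul_qPochAt ht x j
    have hQ := qPochAt_self_ne_zero hfin k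
    have hu := one_sub_pow_succ_ne_zero hfin k
    rw [ih] at hrec
    rw [prod_range_succ, qPochAt_self, prod_range_succ, ← qPochAt_self, eq_div_iff (mul_ne_zero hQ hu)]
    field_simp at hrec
    linear_combination hrec

theorem sum_qbinomAt_mul_qPochAt (ht : t ≠ 0) (hfin : ¬IsOfFinOrder t) (k : ℕ) (x : RatFunc ℚ) :
    ∑ j ∈ range (k + 1),
        (-1 : RatFunc ℚ) ^ j * t ^ ((j : ℤ) * ((j : ℤ) - 1) / 2 - (k : ℤ) * j) *
          qbinomAt t k j * (t ^ j * qPochAt x t j / qPochAt t t j) =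
      qPochAt (x * t⁻¹) t⁻¹ k / qPochAt t⁻¹ t⁻¹ k := by
  rw [qPochAt_inv_div ht, ← sum_chuCoeff_mul_qPochAt ht hfin]
  refine sum_congr rfl fun j _ => ?_
  rw [neg_one_pow_mul_zpow_mul_qbinomAt ht, chuCoeff]
  ring

end

/-- `Σ_{j=0}^k (-1)^j q^{binom(j,2)-kj} [k choose j]_q · q^j (x;q)_j/(q;q)_j
  = (xq^{-1};q^{-1})_k/(q^{-1};q^{-1})_k`. -/
theorem stmt11 (k : ℕ) (x : RatFunc ℚ) :
    ∑ j ∈ Finset.range (k + 1),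
        (-1 : RatFunc ℚ) ^ j * qv ^ ((j : ℤ) * ((j : ℤ) - 1) / 2 - (k : ℤ) * j) *
          qbinom k j * (qv ^ j * qPochAt x qv j / qPochAt qv qv j) =
      qPochAt (x * qv⁻¹) qv⁻¹ k / qPochAt qv⁻¹ qv⁻¹ k :=
  sum_qbinomAt_mul_qPochAt RatFunc.X_ne_zero not_isOfFinOrder_qv k x
end
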